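/- Let φ : ℝ³ → ℝ be a smooth harmonic function such that every second order partial derivative ∂²_{x_i x_j}φ, i,j ∈ {1,2,3}, is square integrable over ℝ³. Then φ is an affine function: there exist a ∈ ℝ³ and b ∈ ℝ such that φ(x) = b + ⟨a, x⟩ for all x ∈ ℝ³, where ⟨·,·⟩ is the Euclidean inner product. -/

import Mathlib

open MeasureTheory

/-- The partial derivative of `f : ℝ³ → ℝ` in the `i`-th coordinate direction at `x`. -/
noncomputable def pd (f : (Fin 3 → ℝ) → ℝ) (i : Fin 3) (x : Fin 3 → ℝ) : ℝ :=
  fderiv ℝ f x (Pi.single i 1)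

namespace Aux4
abbrev E3 := Fin 3 → ℝ
noncomputable abbrev e (i : Fin 3) : E3 := Pi.single i 1

lemma norm_e (i : Fin 3) : ‖e i‖ = 1 := by simp [e, Pi.norm_single]

lemma clm_expand {F : Type*} [NormedAddCommGroup F] [NormedSpace ℝ F]
    (L : E3 →L[ℝ] F) (v : E3) : L v = ∑ i, v i • L (e i) := by
  have hv : v = ∑ i, v i • e i := by
    funext j
    simp [e, Pi.single_apply, Finset.sum_apply]
  conv_lhs => rw [hv]
  rw [map_sum]
  simp

lemma contDiff_pd {f : E3 → ℝ} (hf : ContDiff ℝ (⊤ : ℕ∞) f) (i : Fin 3) :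
    ContDiff ℝ (⊤ : ℕ∞) (pd f i) :=
  (hf.fderiv_right (by simp)).clm_apply contDiff_const

lemma csmul₁ {f g : E3 → ℝ} (hf : HasCompactSupport f) :
    HasCompactSupport fun x => f x * g x := by
  apply hf.mono
  intro x hx
  simp only [Function.mem_support, ne_eq] at hx ⊢
  intro h; exact hx (by simp [h])

lemma csmul₂ {f g : E3 → ℝ} (hg : HasCompactSupport g) :
    HasCompactSupport fun x => f x * g x := by
  apply hg.mono
  intro x hx
  simp only [Function.mem_support, ne_eq] at hx ⊢
  intro h; exact hx (by simp [h])

set_option maxHeartbeats 2000000 in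
lemma harmonic_zero (u : E3 → ℝ) (hu : ContDiff ℝ (⊤ : ℕ∞) u)
    (hh : ∀ x, ∑ i, pd (pd u i) i x = 0)
    (hi : Integrable (fun x => u x ^ 2)) : ∀ x, u x = 0 := by
  -- basic regularity facts
  have hud : Differentiable ℝ u := hu.differentiable (by simp)
  have hucont : Continuous u := hu.continuous
  have hpdc : ∀ i, Continuous (pd u i) := fun i => (contDiff_pd hu i).continuous
  have hpdd : ∀ i, Differentiable ℝ (pd u i) :=
    fun i => (contDiff_pd hu i).differentiable (by simp)
  have hpd2c : ∀ i j, Continuous (pd (pd u i) j) :=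
    fun i j => (contDiff_pd (contDiff_pd hu i) j).continuous
  -- the bump function
  set η : ContDiffBump (0 : E3) := ⟨1, 2, one_pos, one_lt_two⟩ with hηdef
  have hη1 : ContDiff ℝ 1 (η : E3 → ℝ) := η.contDiff.of_le (by exact_mod_cast le_top)
  have hηcs : HasCompactSupport (η : E3 → ℝ) := η.hasCompactSupport
  have hηd : Differentiable ℝ (η : E3 → ℝ) := hη1.differentiable one_ne_zero
  have hηdc : Continuous (fderiv ℝ (η : E3 → ℝ)) := hη1.continuous_fderiv one_ne_zero
  obtain ⟨M, hM⟩ := (hηcs.fderiv (𝕜 := ℝ)).exists_bound_of_continuous hηdc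
  have hM0 : 0 ≤ M := le_trans (norm_nonneg _) (hM 0)
  set I := ∫ x, u x ^ 2 with hIdef
  have hI0 : 0 ≤ I := integral_nonneg fun x => sq_nonneg _
  -- the key Caccioppoli estimate
  have key : ∀ R : ℝ, 0 < R →
      ∫ x, ∑ i, ((η (R⁻¹ • x) : ℝ) * pd u i x) ^ 2 ≤ 12 * M ^ 2 * I / R ^ 2 := by
    intro R hR
    set c : ℝ := R⁻¹ with hcdef
    have hc : 0 < c := inv_pos.2 hR
    set ηR : E3 → ℝ := fun x => η (c • x) with hηRdef
    set dηR : Fin 3 → E3 → ℝ := fun i x => c • (fderiv ℝ (η : E3 → ℝ) (c • x) (e i))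
      with hdηRdef
    have hηRd : ∀ x, HasFDerivAt ηR (c • fderiv ℝ (η : E3 → ℝ) (c • x)) x := by
      intro x
      have hin : HasFDerivAt (fun y : E3 => c • y)
          (c • ContinuousLinearMap.id ℝ E3) x := (hasFDerivAt_id x).fun_const_smul _
      have := ((hηd _).hasFDerivAt).comp x hin
      refine this.congr_fderiv ?_
      ext v
      simp
    have hηRdiff : Differentiable ℝ ηR := fun x => (hηRd x).differentiableAt
    have hηRcont : Continuous ηR := hη1.continuous.comp (continuous_const_smul c)
    have hηRcs : HasCompactSupport ηR :=
      hηcs.comp_homeomorph (Homeomorph.smulOfNeZero c hc.ne')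
    have hdηRcont : ∀ i, Continuous (dηR i) := by
      intro i
      exact continuous_const.fun_smul
        (((ContinuousLinearMap.apply ℝ ℝ (e i)).continuous).comp
          (hηdc.comp (continuous_const_smul c)))
    have hdηRcs : ∀ i, HasCompactSupport (dηR i) := by
      intro i
      have h1 : HasCompactSupport (fun x : E3 => fderiv ℝ (η : E3 → ℝ) (c • x)) :=
        (hηcs.fderiv (𝕜 := ℝ)).comp_homeomorph (Homeomorph.smulOfNeZero c hc.ne')
      exact (h1.comp_left (g := fun L : E3 →L[ℝ] ℝ => c • (L (e i))) (by simp))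
    have hdηRbound : ∀ i x, |dηR i x| ≤ c * M := by
      intro i x
      have h1 : |fderiv ℝ (η : E3 → ℝ) (c • x) (e i)| ≤ M := by
        calc |fderiv ℝ (η : E3 → ℝ) (c • x) (e i)|
            ≤ ‖fderiv ℝ (η : E3 → ℝ) (c • x)‖ * ‖e i‖ :=
              (fderiv ℝ (η : E3 → ℝ) (c • x)).le_opNorm _
          _ ≤ M := by rw [norm_e]; simpa using hM (c • x)
      have : |dηR i x| = c * |fderiv ℝ (η : E3 → ℝ) (c • x) (e i)| := by
        rw [hdηRdef]; simp [abs_mul, abs_of_pos hc]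
      rw [this]
      exact mul_le_mul_of_nonneg_left h1 hc.le
    -- the functions F i = ηR² ∂ᵢu and their derivatives
    set F : Fin 3 → E3 → ℝ := fun i x => ηR x * ηR x * pd u i x with hFdef
    have hFd : ∀ i x, HasFDerivAt (F i)
        ((ηR x * ηR x) • fderiv ℝ (pd u i) x +
          (pd u i x) • (ηR x • (c • fderiv ℝ (η : E3 → ℝ) (c • x)) +
            ηR x • (c • fderiv ℝ (η : E3 → ℝ) (c • x)))) x := by
      intro i x
      exact ((hηRd x).mul (hηRd x)).mul ((hpdd i x).hasFDerivAt)
    have hFdiff : ∀ i, Differentiable ℝ (F i) := fun i x => (hFd i x).differentiableAt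
    have hFcont : ∀ i, Continuous (F i) :=
      fun i => (hηRcont.mul hηRcont).mul (hpdc i)
    have hFcs : ∀ i, HasCompactSupport (F i) := by
      intro i
      apply hηRcs.mono
      intro x hx
      simp only [Function.mem_support, ne_eq] at hx ⊢
      intro h; exact hx (by simp [hFdef, h])
    have hdF : ∀ i x, fderiv ℝ (F i) x (e i) =
        ηR x * ηR x * pd (pd u i) i x + pd u i x * (2 * (ηR x * dηR i x)) := by
      intro i x
      rw [(hFd i x).fderiv]
      simp only [ContinuousLinearMap.add_apply, ContinuousLinearMap.coe_smul',
        Pi.smul_apply, smul_eq_mul, hdηRdef]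
      show _ * pd (pd u i) i x + _ = _
      ring
    have hdFcont : ∀ i, Continuous (fun x => fderiv ℝ (F i) x (e i)) := by
      intro i
      have : (fun x => fderiv ℝ (F i) x (e i)) =
          fun x => ηR x * ηR x * pd (pd u i) i x + pd u i x * (2 * (ηR x * dηR i x)) :=
        funext (hdF i)
      rw [this]
      exact ((hηRcont.mul hηRcont).mul (hpd2c i i)).add
        ((hpdc i).mul ((continuous_const.mul (hηRcont.mul (hdηRcont i)))))
    have hdFcs : ∀ i, HasCompactSupport (fun x => fderiv ℝ (F i) x (e i)) := by
      intro i
      exact ((hFcs i).fderiv (𝕜 := ℝ)).comp_left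
        (g := fun L : E3 →L[ℝ] ℝ => L (e i)) (by simp)
    -- integration by parts
    have hibp : ∀ i, ∫ x, F i x * fderiv ℝ u x (e i) = -∫ x, fderiv ℝ (F i) x (e i) * u x := by
      intro i
      refine integral_mul_fderiv_eq_neg_fderiv_mul_of_integrable ?_ ?_ ?_ (fun x _ => hFdiff i x) (fun x _ => hud x)
      · exact (((hdFcont i).mul hucont).integrable_of_hasCompactSupport (csmul₁ (hdFcs i)))
      · exact (((hFcont i).mul ((hpdc i))).integrable_of_hasCompactSupport (csmul₁ (hFcs i)))
      · exact (((hFcont i).mul hucont).integrable_of_hasCompactSupport (csmul₁ (hFcs i)))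
    -- the main quantity
    set B := ∫ x, ∑ i, (ηR x * pd u i x) ^ 2 with hBdef
    have hsq_cs : ∀ i : Fin 3, HasCompactSupport (fun x => (ηR x * pd u i x) ^ 2) := by
      intro i
      apply hηRcs.mono
      intro x hx
      simp only [Function.mem_support, ne_eq] at hx ⊢
      intro h; exact hx (by simp [h])
    have hsq_int : ∀ i : Fin 3, Integrable (fun x => (ηR x * pd u i x) ^ 2) := fun i =>
      ((hηRcont.mul (hpdc i)).pow 2).integrable_of_hasCompactSupport (hsq_cs i)
    have hdFu_int : ∀ i : Fin 3, Integrable (fun x => fderiv ℝ (F i) x (e i) * u x) :=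
      fun i => ((hdFcont i).mul hucont).integrable_of_hasCompactSupport (csmul₁ (hdFcs i))
    have step1 : B = ∑ i, ∫ x, F i x * fderiv ℝ u x (e i) := by
      rw [hBdef, integral_finset_sum _ (fun i _ => hsq_int i)]
      refine Finset.sum_congr rfl fun i _ => ?_
      have : (fun x => (ηR x * pd u i x) ^ 2) = fun x => F i x * fderiv ℝ u x (e i) := by
        funext x
        show _ = F i x * pd u i x
        rw [hFdef]
        ring
      rw [this]
    have step2 : B = -∫ x, ∑ i, fderiv ℝ (F i) x (e i) * u x := by
      rw [step1, integral_finset_sum _ (fun i _ => hdFu_int i), Finset.sum_congr rfl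
        (fun i (_ : i ∈ Finset.univ) => hibp i), ← Finset.sum_neg_distrib]
    have hpt : ∀ x, ∑ i, fderiv ℝ (F i) x (e i) * u x
        = ∑ i, 2 * (ηR x * dηR i x) * (pd u i x * u x) := by
      intro x
      have h1 : ∀ i : Fin 3, fderiv ℝ (F i) x (e i) * u x =
          (ηR x * ηR x * u x) * pd (pd u i) i x
            + 2 * (ηR x * dηR i x) * (pd u i x * u x) := by
        intro i; rw [hdF i x]; ring
      rw [Finset.sum_congr rfl fun i _ => h1 i, Finset.sum_add_distrib,
        ← Finset.mul_sum, hh x, mul_zero, zero_add]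
    have step3 : B = ∫ x, ∑ i, -(2 * (ηR x * dηR i x) * (pd u i x * u x)) := by
      rw [step2, ← integral_neg]
      congr 1
      funext x
      rw [hpt x, ← Finset.sum_neg_distrib]
    -- pointwise bound and splitting
    have hterm_cs : ∀ i : Fin 3,
        HasCompactSupport (fun x => -(2 * (ηR x * dηR i x) * (pd u i x * u x))) := by
      intro i
      apply hηRcs.mono
      intro x hx
      simp only [Function.mem_support, ne_eq] at hx ⊢
      intro h; exact hx (by simp [h])
    have hterm_int : ∀ i : Fin 3,
        Integrable (fun x => -(2 * (ηR x * dηR i x) * (pd u i x * u x))) := fun i =>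
      (((continuous_const.mul (hηRcont.mul (hdηRcont i))).mul
        ((hpdc i).mul hucont)).neg).integrable_of_hasCompactSupport (hterm_cs i)
    have hdu_cs : ∀ i : Fin 3, HasCompactSupport (fun x => (dηR i x * u x) ^ 2) := by
      intro i
      apply (hdηRcs i).mono
      intro x hx
      simp only [Function.mem_support, ne_eq] at hx ⊢
      intro h; exact hx (by simp [h])
    have hdu_int : ∀ i : Fin 3, Integrable (fun x => (dηR i x * u x) ^ 2) := fun i =>
      (((hdηRcont i).mul hucont).pow 2).integrable_of_hasCompactSupport (hdu_cs i)
    have step4 : B ≤ ∫ x, ((1/2) * ∑ i, (ηR x * pd u i x) ^ 2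
        + ∑ i, 2 * (dηR i x * u x) ^ 2) := by
      rw [step3]
      refine integral_mono (integrable_finset_sum _ (fun i _ => hterm_int i)) ?_ ?_
      · exact ((integrable_finset_sum _ fun i _ => hsq_int i).const_mul (1/2)).add
          (integrable_finset_sum _ fun i _ => (hdu_int i).const_mul 2)
      · intro x
        have : ∀ i : Fin 3, -(2 * (ηR x * dηR i x) * (pd u i x * u x)) ≤
            (1/2) * (ηR x * pd u i x) ^ 2 + 2 * (dηR i x * u x) ^ 2 := by
          intro i
          nlinarith [sq_nonneg (ηR x * pd u i x + 2 * (dηR i x * u x))]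
        calc ∑ i, -(2 * (ηR x * dηR i x) * (pd u i x * u x))
            ≤ ∑ i, ((1/2) * (ηR x * pd u i x) ^ 2 + 2 * (dηR i x * u x) ^ 2) :=
              Finset.sum_le_sum fun i _ => this i
          _ = _ := by rw [Finset.sum_add_distrib, ← Finset.mul_sum]
    have step5 : ∫ x, ((1/2) * ∑ i, (ηR x * pd u i x) ^ 2
        + ∑ i, 2 * (dηR i x * u x) ^ 2)
        = (1/2) * B + ∫ x, ∑ i, 2 * (dηR i x * u x) ^ 2 := by
      rw [integral_add ((integrable_finset_sum _ fun i _ => hsq_int i).const_mul (1/2))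
        (integrable_finset_sum _ fun i _ => (hdu_int i).const_mul 2),
        integral_const_mul]
    have hT : ∫ x, ∑ i, 2 * (dηR i x * u x) ^ 2 ≤ 6 * (c * M) ^ 2 * I := by
      have hptT : ∀ x, ∑ i, 2 * (dηR i x * u x) ^ 2 ≤ 6 * (c * M) ^ 2 * u x ^ 2 := by
        intro x
        have hper : ∀ i : Fin 3, 2 * (dηR i x * u x) ^ 2 ≤ 2 * ((c*M)^2 * u x ^ 2) := by
          intro i
          have h := abs_le.mp (hdηRbound i x)
          have h2 : (dηR i x) ^ 2 ≤ (c*M) ^ 2 := sq_le_sq' h.1 h.2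
          nlinarith [sq_nonneg (u x)]
        calc ∑ i, 2 * (dηR i x * u x) ^ 2 ≤ ∑ _i : Fin 3, 2 * ((c*M)^2 * u x ^ 2) :=
              Finset.sum_le_sum fun i _ => hper i
          _ = 6 * (c * M) ^ 2 * u x ^ 2 := by
            simp [Finset.sum_const]
            ring
      calc ∫ x, ∑ i, 2 * (dηR i x * u x) ^ 2 ≤ ∫ x, 6 * (c * M) ^ 2 * u x ^ 2 :=
            integral_mono (integrable_finset_sum _ fun i _ => (hdu_int i).const_mul 2)
              (hi.const_mul _) hptT
        _ = 6 * (c * M) ^ 2 * I := by rw [integral_const_mul]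
    have hBB : B ≤ 12 * (c * M) ^ 2 * I := by
      have := step4
      rw [step5] at this
      linarith
    show B ≤ 12 * M ^ 2 * I / R ^ 2
    have hcc : 12 * (c * M) ^ 2 * I = 12 * M ^ 2 * I / R ^ 2 := by
      rw [hcdef]
      field_simp
    linarith
  -- global integrability of the cutoff quantity
  have hBint : ∀ R : ℝ, 0 < R →
      Integrable (fun x => ∑ i, ((η (R⁻¹ • x) : ℝ) * pd u i x) ^ 2) := by
    intro R hR
    have hηRcont : Continuous (fun x : E3 => (η (R⁻¹ • x) : ℝ)) :=
      η.continuous.comp (continuous_const_smul _)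
    have hηRcs : HasCompactSupport (fun x : E3 => (η (R⁻¹ • x) : ℝ)) :=
      η.hasCompactSupport.comp_homeomorph
        (Homeomorph.smulOfNeZero R⁻¹ (inv_ne_zero hR.ne'))
    refine integrable_finset_sum _ fun i _ => ?_
    refine ((hηRcont.mul (hpdc i)).pow 2).integrable_of_hasCompactSupport ?_
    apply hηRcs.mono
    intro x hx
    simp only [Function.mem_support, ne_eq] at hx ⊢
    intro h; exact hx (by simp [h])
  -- all first partials vanish
  have hq : ∀ x₀, ∑ i, pd u i x₀ ^ 2 = 0 := by
    intro x₀
    by_contra hne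
    set q : E3 → ℝ := fun x => ∑ i, pd u i x ^ 2 with hqdef
    have hq0 : 0 < q x₀ :=
      lt_of_le_of_ne (Finset.sum_nonneg fun i _ => sq_nonneg _) (Ne.symm hne)
    have hqc : Continuous q := continuous_finset_sum _ fun i _ => (hpdc i).pow 2
    obtain ⟨δ, hδ0, hδ⟩ : ∃ δ > 0, ∀ x ∈ Metric.ball x₀ δ, q x₀ / 2 ≤ q x := by
      have hev : ∀ᶠ x in nhds x₀, q x₀ / 2 < q x :=
        (hqc.continuousAt (x := x₀)).eventually (eventually_gt_nhds (by linarith))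
      obtain ⟨δ, hδ0, hδ⟩ := Metric.eventually_nhds_iff_ball.mp hev
      exact ⟨δ, hδ0, fun x hx => (hδ x hx).le⟩
    obtain ⟨κ, hκdef, hκ⟩ : ∃ κ : ℝ,
        κ = q x₀ / 2 * (volume (Metric.ball x₀ δ)).toReal ∧ 0 < κ := by
      refine ⟨_, rfl, ?_⟩
      apply mul_pos (by linarith)
      exact ENNReal.toReal_pos (Metric.measure_ball_pos volume x₀ hδ0).ne' measure_ball_lt_top.ne
    obtain ⟨R, hR0, hRge, hRgt⟩ : ∃ R : ℝ, 0 < R ∧ ‖x₀‖ + δ ≤ R ∧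
        Real.sqrt (12 * M ^ 2 * I / κ) < R := by
      refine ⟨max (‖x₀‖ + δ) (Real.sqrt (12 * M ^ 2 * I / κ) + 1), ?_, le_max_left _ _, ?_⟩
      · exact lt_of_lt_of_le (add_pos_of_nonneg_of_pos (norm_nonneg _) hδ0) (le_max_left _ _)
      · exact lt_of_lt_of_le (lt_add_one _) (le_max_right _ _)
    have hone : ∀ x ∈ Metric.ball x₀ δ, (η (R⁻¹ • x) : ℝ) = 1 := by
      intro x hx
      apply η.one_of_mem_closedBall
      have hxn : ‖x‖ ≤ ‖x₀‖ + δ := by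
        have := mem_ball_iff_norm.mp hx
        calc ‖x‖ = ‖x₀ + (x - x₀)‖ := by ring_nf
          _ ≤ ‖x₀‖ + ‖x - x₀‖ := norm_add_le _ _
          _ ≤ ‖x₀‖ + δ := by linarith
      have hxR : ‖x‖ ≤ R := le_trans hxn hRge
      simp only [Metric.mem_closedBall, dist_zero_right]
      rw [norm_smul]
      have : ‖R⁻¹‖ = R⁻¹ := by rw [Real.norm_eq_abs, abs_of_pos (inv_pos.2 hR0)]
      rw [this]
      rw [inv_mul_le_iff₀ hR0]
      simpa [hηdef] using hxR
    have hlow : κ ≤ ∫ x, ∑ i, ((η (R⁻¹ • x) : ℝ) * pd u i x) ^ 2 := by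
      have h1 : κ ≤ ∫ x in Metric.ball x₀ δ, ∑ i, ((η (R⁻¹ • x) : ℝ) * pd u i x) ^ 2 := by
        rw [hκdef]
        rw [mul_comm, ← smul_eq_mul, ← measureReal_def]
        apply setIntegral_ge_of_const_le measurableSet_ball measure_ball_lt_top.ne
        · intro x hx
          have : ∑ i, ((η (R⁻¹ • x) : ℝ) * pd u i x) ^ 2 = q x := by
            rw [hqdef]
            refine Finset.sum_congr rfl fun i _ => ?_
            rw [hone x hx, one_mul]
          rw [this]
          exact hδ x hx
        · exact (hBint R hR0).integrableOn
      refine le_trans h1 (setIntegral_le_integral (hBint R hR0) ?_)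
      exact Filter.Eventually.of_forall fun x => Finset.sum_nonneg fun i _ => sq_nonneg _
    have hup := key R hR0
    have hcontr : 12 * M ^ 2 * I / R ^ 2 < κ := by
      have hnn : 0 ≤ 12 * M ^ 2 * I / κ := by positivity
      have h1 : 12 * M ^ 2 * I / κ < R ^ 2 := by
        nlinarith [Real.sq_sqrt hnn, Real.sqrt_nonneg (12 * M ^ 2 * I / κ)]
      rw [div_lt_iff₀ (by positivity : (0:ℝ) < R ^ 2)]
      rw [div_lt_iff₀ hκ] at h1
      linarith
    linarith
  -- conclude
  have hfz : ∀ x, fderiv ℝ u x = 0 := by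
    intro x
    have hpz : ∀ i, pd u i x = 0 := by
      intro i
      have h0 := (Finset.sum_eq_zero_iff_of_nonneg
        (fun j (_ : j ∈ Finset.univ) => sq_nonneg (pd u j x))).mp (hq x) i (Finset.mem_univ i)
      exact pow_eq_zero_iff two_ne_zero |>.mp h0
    ext v
    have hexp := clm_expand (fderiv ℝ u x) v
    rw [hexp]
    have : ∀ i, fderiv ℝ u x (e i) = 0 := hpz
    simp [this]
  have hconst : ∀ x, u x = u 0 := fun x => is_const_of_fderiv_eq_zero hud hfz x 0
  have huniv : (volume : Measure E3) Set.univ = ⊤ := by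
    rw [volume_pi, MeasureTheory.Measure.pi_univ]
    simp [Real.volume_univ]
  have hzero : u 0 = 0 := by
    have h2 : (fun x : E3 => u x ^ 2) = fun _ => u 0 ^ 2 := funext fun x => by rw [hconst x]
    rw [h2] at hi
    rcases integrable_const_iff.mp hi with h | h
    · exact pow_eq_zero_iff two_ne_zero |>.mp h
    · exact absurd h.measure_univ_lt_top (by rw [huniv]; simp)
  intro x
  rw [hconst x, hzero]

lemma pd_pd_eq {f : E3 → ℝ} (hf : ContDiff ℝ (⊤ : ℕ∞) f) (i j : Fin 3) (x : E3) :
    pd (pd f i) j x = fderiv ℝ (fderiv ℝ f) x (e j) (e i) := by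
  have hd2 : DifferentiableAt ℝ (fderiv ℝ f) x :=
    ((hf.fderiv_right (m := (⊤ : ℕ∞)) (by simp)).differentiable (by simp)) x
  show fderiv ℝ (fun y => fderiv ℝ f y (e i)) x (e j) = _
  rw [fderiv_clm_apply hd2 (differentiableAt_const _)]
  simp

lemma pd_comm {f : E3 → ℝ} (hf : ContDiff ℝ (⊤ : ℕ∞) f) (i j : Fin 3) (x : E3) :
    pd (pd f i) j x = pd (pd f j) i x := by
  rw [pd_pd_eq hf i j x, pd_pd_eq hf j i x]
  exact second_derivative_symmetric
    (fun y => ((hf.differentiable (by simp)) y).hasFDerivAt)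
    (((hf.fderiv_right (m := (⊤ : ℕ∞)) (by simp)).differentiable (by simp)) x).hasFDerivAt (e j) (e i)

lemma pd_sum {g : Fin 3 → E3 → ℝ} (hg : ∀ k, ContDiff ℝ (⊤ : ℕ∞) (g k)) (i : Fin 3) (x : E3) :
    pd (fun y => ∑ k, g k y) i x = ∑ k, pd (g k) i x := by
  show fderiv ℝ (fun y => ∑ k, g k y) x (e i) = _
  rw [fderiv_fun_sum (fun k _ => ((hg k).differentiable (by simp)) x)]
  simp [pd]

lemma pd_harm {f : E3 → ℝ} (hf : ContDiff ℝ (⊤ : ℕ∞) f)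
    (hh : ∀ x, ∑ i, pd (pd f i) i x = 0) (j : Fin 3) :
    ∀ x, ∑ i, pd (pd (pd f j) i) i x = 0 := by
  intro x
  have h1 : ∀ i : Fin 3, pd (pd (pd f j) i) i x = pd (pd (pd f i) i) j x := by
    intro i
    have e1 : pd (pd f j) i = pd (pd f i) j := funext fun y => pd_comm hf j i y
    rw [e1]
    exact pd_comm (contDiff_pd hf i) j i x
  rw [Finset.sum_congr rfl (fun i _ => h1 i),
    ← pd_sum (fun k => contDiff_pd (contDiff_pd hf k) k) j x]
  have e2 : (fun y => ∑ k, pd (pd f k) k y) = fun _ => (0:ℝ) := funext hh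
  rw [e2]
  show fderiv ℝ (fun _ => (0:ℝ)) x (e j) = 0
  simp

end Aux4

/-- A smooth harmonic function `φ : ℝ³ → ℝ` all of whose second order partial
derivatives are square integrable over `ℝ³` is affine:
`φ(x) = b + ⟨a, x⟩` for some `a ∈ ℝ³` and `b ∈ ℝ`. -/
theorem stmt4 (φ : (Fin 3 → ℝ) → ℝ) (hsmooth : ContDiff ℝ (⊤ : ℕ∞) φ)
    (hharm : ∀ x, ∑ i, pd (pd φ i) i x = 0)
    (hL2 : ∀ i j : Fin 3, Integrable (fun x => (pd (pd φ j) i x) ^ 2)) :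
    ∃ (a : Fin 3 → ℝ) (b : ℝ), ∀ x, φ x = b + ∑ i, a i * x i := by
  have hz : ∀ i j : Fin 3, ∀ x, pd (pd φ j) i x = 0 := by
    intro i j
    exact Aux4.harmonic_zero _ (Aux4.contDiff_pd (Aux4.contDiff_pd hsmooth j) i)
      (Aux4.pd_harm (Aux4.contDiff_pd hsmooth j) (Aux4.pd_harm hsmooth hharm j) i)
      (by simpa using hL2 i j)
  have hf2 : ∀ x, fderiv ℝ (fderiv ℝ φ) x = 0 := by
    intro x
    have hij : ∀ i j : Fin 3, fderiv ℝ (fderiv ℝ φ) x (Aux4.e i) (Aux4.e j) = 0 := by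
      intro i j
      rw [← Aux4.pd_pd_eq hsmooth j i x]
      exact hz i j x
    ext v w
    have h1 : fderiv ℝ (fderiv ℝ φ) x v w
        = ∑ i, v i • (fderiv ℝ (fderiv ℝ φ) x (Aux4.e i) w) := by
      rw [Aux4.clm_expand (fderiv ℝ (fderiv ℝ φ) x) v]
      simp
    have h2 : ∀ i : Fin 3, fderiv ℝ (fderiv ℝ φ) x (Aux4.e i) w = 0 := by
      intro i
      rw [Aux4.clm_expand (fderiv ℝ (fderiv ℝ φ) x (Aux4.e i)) w]
      simp [hij i]
    rw [h1]
    simp [h2]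
  have hφd : Differentiable ℝ φ := hsmooth.differentiable (by simp)
  have hd1 : Differentiable ℝ (fderiv ℝ φ) :=
    (hsmooth.fderiv_right (m := (⊤ : ℕ∞)) (by simp)).differentiable (by simp)
  have hconst : ∀ x, fderiv ℝ φ x = fderiv ℝ φ 0 :=
    fun x => is_const_of_fderiv_eq_zero hd1 hf2 x 0
  set L : (Fin 3 → ℝ) →L[ℝ] ℝ := fderiv ℝ φ 0 with hLdef
  have hψ : ∀ x, fderiv ℝ (fun y => φ y - L y) x = 0 := by
    intro x
    rw [fderiv_fun_sub (hφd x) L.differentiableAt, L.fderiv, hconst x]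
    simp
  have hψconst : ∀ x, φ x - L x = φ 0 - L 0 :=
    fun x => is_const_of_fderiv_eq_zero
      (fun y => (hφd y).sub L.differentiableAt) hψ x 0
  refine ⟨fun i => L (Aux4.e i), φ 0, fun x => ?_⟩
  have h := hψconst x
  rw [map_zero, sub_zero] at h
  have hL : L x = ∑ i, x i * L (Aux4.e i) := by
    rw [Aux4.clm_expand L x]
    simp [smul_eq_mul]
  have hφx : φ x = φ 0 + L x := by linarith
  rw [hφx, hL]
  congr 1
  exact Finset.sum_congr rfl fun i _ => mul_comm _ _
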